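/- Let 1/2 < H < 1 and define γ_H(k) = (1/2)|k+1|^{2H} + (1/2)|k−1|^{2H} − |k|^{2H} for k ∈ ℤ. Then for every k ∈ ℤ with k ≠ 0: 0 < γ_H(k) ≤ |k|^{−2(1−H)}. -/

import Mathlib

noncomputable def gammaH (H : ℝ) (k : ℤ) : ℝ :=
  (1 / 2) * |((k + 1 : ℤ) : ℝ)| ^ (2 * H) + (1 / 2) * |((k - 1 : ℤ) : ℝ)| ^ (2 * H)
    - |(k : ℝ)| ^ (2 * H)

/-! Write `a = 2H ∈ (1, 2)` and `n = |k| ≥ 1`, so that `γ_H(k) = ((n+1)^a + (n-1)^a)/2 - n^a`.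
Positivity is strict convexity of `t ↦ t^a`. For the upper bound, Hölder's inequality
interpolates the `a`-th power sum of `u = n+1`, `v = n-1` between their sum `2n` and their
sum of squares `2n² + 2`; since the exponents `2 - a` and `a - 1` add up to one, this gives
`(n+1)^a + (n-1)^a ≤ 2n^a (1 + n⁻²)^{a-1} ≤ 2n^a + 2n^{a-2}`. -/

open Real

lemma rpow_add_rpow_le_add_rpow_mul_sq_add_sq_rpow {a u v : ℝ} (ha1 : 1 < a) (ha2 : a ≤ 2)
    (hu : 0 ≤ u) (hv : 0 ≤ v) : u ^ a + v ^ a ≤ (u + v) ^ (2 - a) * (u ^ 2 + v ^ 2) ^ (a - 1) := by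
  have hp : 1 ≤ (a - 1)⁻¹ := one_le_inv₀ (by linarith) |>.mpr (by linarith)
  have holder := inner_le_weight_mul_Lp_of_nonneg Finset.univ hp ![u, v]
    ![u ^ (a - 1), v ^ (a - 1)] (by simp [Fin.forall_fin_two, hu, hv])
    (fun i => by fin_cases i <;> simp <;> positivity)
  have hmul : ∀ b : ℝ, 0 ≤ b → b * b ^ (a - 1) = b ^ a := fun b hb => by
    rw [mul_comm, ← rpow_add_one' hb (by linarith), sub_add_cancel]
  have hinv : ∀ b : ℝ, 0 ≤ b → b * (b ^ (a - 1)) ^ (a - 1)⁻¹ = b ^ 2 := fun b hb => by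
    rw [rpow_rpow_inv hb (by linarith), sq]
  simpa [Fin.sum_univ_two, hmul u hu, hmul v hv, hinv u hu, hinv v hv, inv_inv,
    show 1 - (a - 1) = 2 - a by ring] using holder

lemma one_add_rpow_add_one_sub_rpow_le {a x : ℝ} (ha1 : 1 < a) (ha2 : a ≤ 2) (hx0 : 0 ≤ x)
    (hx1 : x ≤ 1) : (1 + x) ^ a + (1 - x) ^ a ≤ 2 * (1 + x ^ 2) := by
  calc (1 + x) ^ a + (1 - x) ^ a
      ≤ (2 : ℝ) ^ (2 - a) * (2 * (1 + x ^ 2)) ^ (a - 1) := by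
        convert rpow_add_rpow_le_add_rpow_mul_sq_add_sq_rpow (u := 1 + x) (v := 1 - x) ha1 ha2
          (by linarith) (by linarith) using 3 <;> ring
    _ = 2 * (1 + x ^ 2) ^ (a - 1) := by
        rw [mul_rpow (by norm_num) (by positivity), ← mul_assoc,
          ← rpow_add_of_nonneg (by norm_num) (by linarith) (by linarith)]
        norm_num
    _ ≤ 2 * (1 + x ^ 2) := by
        gcongr
        exact rpow_le_self_of_one_le (by nlinarith) (by linarith)

lemma rpow_lt_avg_rpow_sub_one_rpow_add_one {a n : ℝ} (ha : 1 < a) (hn : 1 ≤ n) :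
    n ^ a < ((n - 1) ^ a + (n + 1) ^ a) / 2 := by
  have h := (strictConvexOn_rpow ha).2 (Set.mem_Ici.2 (by linarith : (0 : ℝ) ≤ n - 1))
    (Set.mem_Ici.2 (by linarith : (0 : ℝ) ≤ n + 1)) (by linarith)
    (by norm_num : (0 : ℝ) < 1 / 2) (by norm_num : (0 : ℝ) < 1 / 2) (by norm_num)
  simp only [smul_eq_mul] at h
  rw [show (1 / 2 : ℝ) * (n - 1) + 1 / 2 * (n + 1) = n by ring] at h
  linarith

lemma rpow_add_one_add_rpow_sub_one_le {a n : ℝ} (ha1 : 1 < a) (ha2 : a ≤ 2) (hn : 1 ≤ n) :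
    (n + 1) ^ a + (n - 1) ^ a ≤ 2 * n ^ a + 2 * n ^ (a - 2) := by
  have hn0 : 0 < n := by linarith
  have hscale : ∀ c : ℝ, 0 ≤ c → n ^ a * c ^ a = (n * c) ^ a := fun c hc =>
    (mul_rpow hn0.le hc).symm
  calc (n + 1) ^ a + (n - 1) ^ a
      = n ^ a * ((1 + n⁻¹) ^ a + (1 - n⁻¹) ^ a) := by
        rw [mul_add, hscale _ (by positivity),
          hscale _ (sub_nonneg.2 (inv_le_one_of_one_le₀ hn))]
        field_simp
    _ ≤ n ^ a * (2 * (1 + n⁻¹ ^ 2)) := by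
        gcongr
        exact one_add_rpow_add_one_sub_rpow_le ha1 ha2 (by positivity) (inv_le_one_of_one_le₀ hn)
    _ = 2 * n ^ a + 2 * n ^ (a - 2) := by
        rw [rpow_sub hn0, rpow_two]
        field_simp

lemma gammaH_neg (H : ℝ) (k : ℤ) : gammaH H (-k) = gammaH H k := by
  simp only [gammaH, Int.cast_add, Int.cast_sub, Int.cast_neg, Int.cast_one, abs_neg]
  rw [show -(k : ℝ) + 1 = -((k : ℝ) - 1) by ring, show -(k : ℝ) - 1 = -((k : ℝ) + 1) by ring,
    abs_neg, abs_neg]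
  ring

lemma gammaH_abs (H : ℝ) (k : ℤ) : gammaH H |k| = gammaH H k := by
  rcases abs_choice k with h | h <;> rw [h]
  exact gammaH_neg H k

lemma gammaH_of_pos (H : ℝ) {k : ℤ} (hk : 0 < k) :
    gammaH H k = ((k + 1 : ℝ) ^ (2 * H) + (k - 1 : ℝ) ^ (2 * H)) / 2 - (k : ℝ) ^ (2 * H) := by
  have hk1 : (1 : ℝ) ≤ k := by exact_mod_cast hk
  rw [gammaH, Int.cast_add, Int.cast_sub, Int.cast_one, abs_of_nonneg (by linarith),
    abs_of_nonneg (by linarith), abs_of_nonneg (by linarith)]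
  ring

/-- For `1/2 < H < 1` and every nonzero `k ∈ ℤ`,
`0 < γ_H(k) ≤ |k|^{−2(1−H)}`. -/
theorem stmt11 (H : ℝ) (hH0 : 1 / 2 < H) (hH1 : H < 1) :
    ∀ k : ℤ, k ≠ 0 → 0 < gammaH H k ∧ gammaH H k ≤ |(k : ℝ)| ^ (-(2 * (1 - H))) := by
  intro k hk
  have hn : (1 : ℝ) ≤ |(k : ℝ)| := by exact_mod_cast Int.one_le_abs hk
  rw [← gammaH_abs, gammaH_of_pos H (abs_pos.2 hk), Int.cast_abs,
    show -(2 * (1 - H)) = 2 * H - 2 by ring]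
  have ha1 : 1 < 2 * H := by linarith
  constructor
  · linarith [rpow_lt_avg_rpow_sub_one_rpow_add_one ha1 hn]
  · linarith [rpow_add_one_add_rpow_sub_one_le ha1 (by linarith) hn]
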